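/- Let T > 0 and let R, L : (0,T) → ℝ be twice differentiable with R(t) > 0 and R'(t)² + L'(t)² = 1 for all t ∈ (0,T), and with L'(t) → 0 as t → 0⁺. Let b₁₁ ∈ L¹((0,T)) and let b₂₂ : (0,T) → ℝ be such that the function t ↦ b₂₂(t)/R(t) is differentiable at every t ∈ (0,T) with derivative (b₂₂/R)'(t) = R'(t)·b₁₁(t), and suppose that b₁₁(t)·R(t)·L'(t) = (L'(t)R''(t) − R'(t)L''(t))·b₂₂(t) for almost every t ∈ (0,T). Then (R'(t)L''(t) − L'(t)R''(t))·b₁₁(t) + L'(t)·b₂₂(t)/R(t)³ = 0 for almost every t ∈ (0,T). -/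

import Mathlib

/-!
Put `f = b₂₂ / R`. The function `L' f` has derivative `L'' f + L' R' b₁₁`, which vanishes almost
everywhere by the linearised Gauss equation, `R'² + L'² = 1` and its derivative
`R' R'' + L' L'' = 0`. Since `f' = R' b₁₁` is integrable, `f` is bounded, so `L' f → 0` at `0⁺`
and therefore `L' f ≡ 0`. Where `L' ≠ 0` this gives `b₂₂ = 0` and then `b₁₁ = 0`; at almost every
zero of `L'` also `L'' = 0`, because a zero at which the derivative does not vanish is isolated,
and a set of isolated points of `ℝ` is countable.
-/

open Set MeasureTheory Filter
open scoped Topology Interval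

section LevelSet

variable {F : Type*} [NormedAddCommGroup F] [NormedSpace ℝ F]

theorem countable_setOf_apply_eq_and_hasDerivAt_ne_zero (f : ℝ → F) (c : F) :
    {x | f x = c ∧ ∃ d ≠ 0, HasDerivAt f d x}.Countable := by
  refine (countable_setOfPred_isolated_right_within (s := f ⁻¹' {c})).mono ?_
  rintro x ⟨hx, d, hd, hfd⟩
  refine ⟨hx, ?_⟩
  have hne : ∀ᶠ z in 𝓝[f ⁻¹' {c} ∩ Ioi x] x, f z ≠ c :=
    nhdsWithin_mono _ (fun z hz => ne_of_gt hz.2) (hfd.eventually_ne hd)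
  have heq : ∀ᶠ z in 𝓝[f ⁻¹' {c} ∩ Ioi x] x, f z = c :=
    eventually_nhdsWithin_of_forall fun z hz => hz.1
  exact eventually_false_iff_eq_bot.mp ((hne.and heq).mono fun z hz => hz.1 hz.2)

theorem ae_deriv_eq_zero_of_apply_eq {f : ℝ → F} {s : Set ℝ}
    (hf : ∀ x ∈ s, DifferentiableAt ℝ f x) (c : F) :
    ∀ᵐ x, x ∈ s → f x = c → deriv f x = 0 := by
  filter_upwards [(countable_setOf_apply_eq_and_hasDerivAt_ne_zero f c).ae_notMem volume]
    with x hx hxs hfx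
  by_contra h
  exact hx ⟨hfx, _, h, (hf x hxs).hasDerivAt⟩

end LevelSet

section FTC

variable {E : Type*} [NormedAddCommGroup E] [NormedSpace ℝ E] [CompleteSpace E]
  {f f' : ℝ → E} {s : Set ℝ}

theorem norm_sub_le_integral_norm_of_hasDerivAt (hs : s.OrdConnected)
    (hf : ∀ x ∈ s, HasDerivAt f (f' x) x) (hf' : IntegrableOn f' s) {a b : ℝ}
    (ha : a ∈ s) (hb : b ∈ s) :
    ‖f b - f a‖ ≤ ∫ x in s, ‖f' x‖ := by
  have hab : uIcc a b ⊆ s := hs.uIcc_subset ha hb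
  rw [← intervalIntegral.integral_eq_sub_of_hasDerivAt (fun x hx => hf x (hab hx))
    (hf'.mono_set hab).intervalIntegrable]
  calc _ ≤ ∫ x in Ι a b, ‖f' x‖ := intervalIntegral.norm_integral_le_integral_norm_uIoc
    _ ≤ ∫ x in s, ‖f' x‖ :=
      setIntegral_mono_set hf'.norm (Eventually.of_forall fun _ => norm_nonneg _)
        (uIoc_subset_uIcc.trans hab).eventuallyLE

theorem exists_norm_le_of_hasDerivAt_of_integrableOn (hs : s.OrdConnected)
    (hf : ∀ x ∈ s, HasDerivAt f (f' x) x) (hf' : IntegrableOn f' s) :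
    ∃ C, ∀ x ∈ s, ‖f x‖ ≤ C := by
  rcases s.eq_empty_or_nonempty with rfl | ⟨a, ha⟩
  · exact ⟨0, by simp⟩
  refine ⟨‖f a‖ + ∫ x in s, ‖f' x‖, fun x hx => ?_⟩
  calc ‖f x‖ = ‖f a + (f x - f a)‖ := by rw [add_sub_cancel]
    _ ≤ ‖f a‖ + ‖f x - f a‖ := norm_add_le _ _
    _ ≤ _ := by grw [norm_sub_le_integral_norm_of_hasDerivAt hs hf hf' ha hx]

theorem eq_of_hasDerivAt_of_ae_eq_zero (hs : s.OrdConnected)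
    (hf : ∀ x ∈ s, HasDerivAt f (f' x) x) (hf' : f' =ᵐ[volume.restrict s] 0) {a b : ℝ}
    (ha : a ∈ s) (hb : b ∈ s) : f a = f b := by
  have hnorm : ∫ x in s, ‖f' x‖ = 0 :=
    integral_eq_zero_of_ae (hf'.mono fun x hx => by simp [hx])
  have := norm_sub_le_integral_norm_of_hasDerivAt hs hf
    ((integrable_zero _ _ _).congr hf'.symm) ha hb
  rw [hnorm, norm_le_zero_iff, sub_eq_zero] at this
  exact this.symm

theorem eqOn_const_of_hasDerivAt_of_ae_eq_zero_of_tendsto {a b : ℝ} {c : E} (hab : a < b)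
    (hf : ∀ x ∈ Ioo a b, HasDerivAt f (f' x) x) (hf' : f' =ᵐ[volume.restrict (Ioo a b)] 0)
    (hlim : Tendsto f (𝓝[>] a) (𝓝 c)) : EqOn f (fun _ => c) (Ioo a b) := by
  intro x hx
  refine tendsto_nhds_unique (tendsto_const_nhds.congr' ?_) hlim
  filter_upwards [Ioo_mem_nhdsGT hab] with y hy
  exact eq_of_hasDerivAt_of_ae_eq_zero ordConnected_Ioo hf hf' hx hy

end FTC

theorem mul_deriv_add_mul_deriv_eq_zero_of_sq_add_sq_eq {u v : ℝ → ℝ} {s : Set ℝ} {c : ℝ}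
    (hs : IsOpen s) (hu : ∀ x ∈ s, DifferentiableAt ℝ u x)
    (hv : ∀ x ∈ s, DifferentiableAt ℝ v x) (huv : ∀ x ∈ s, u x ^ 2 + v x ^ 2 = c)
    {x : ℝ} (hx : x ∈ s) : u x * deriv u x + v x * deriv v x = 0 := by
  have hderiv := ((hu x hx).hasDerivAt.pow 2).add ((hv x hx).hasDerivAt.pow 2)
  have hconst : u ^ 2 + v ^ 2 =ᶠ[𝓝 x] fun _ => c := eventually_of_mem (hs.mem_nhds hx) huv
  have := hderiv.unique ((hasDerivAt_const x c).congr_of_eventuallyEq hconst)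
  norm_num at this
  linarith

theorem deriv_mul_div_eqOn_zero_of_linearized_gauss {T : ℝ} (hT : 0 < T) {R L b11 b22 : ℝ → ℝ}
    (hR2 : ∀ t ∈ Ioo 0 T, DifferentiableAt ℝ (deriv R) t)
    (hL2 : ∀ t ∈ Ioo 0 T, DifferentiableAt ℝ (deriv L) t)
    (hR : ∀ t ∈ Ioo 0 T, R t ≠ 0)
    (harc : ∀ t ∈ Ioo 0 T, (deriv R t) ^ 2 + (deriv L t) ^ 2 = 1)
    (hL0 : Tendsto (deriv L) (𝓝[>] 0) (𝓝 0))
    (hb11 : IntegrableOn b11 (Ioo 0 T))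
    (hb22 : ∀ t ∈ Ioo 0 T, HasDerivAt (fun s => b22 s / R s) (deriv R t * b11 t) t)
    (hGauss : ∀ᵐ t ∂(volume.restrict (Ioo 0 T)),
      b11 t * R t * deriv L t
        = (deriv L t * deriv (deriv R) t - deriv R t * deriv (deriv L) t) * b22 t) :
    EqOn (fun t => deriv L t * (b22 t / R t)) (fun _ => 0) (Ioo 0 T) := by
  have hR'b11 : IntegrableOn (fun t => deriv R t * b11 t) (Ioo 0 T) := by
    refine hb11.bdd_mul (c := 1) (measurable_deriv R).aestronglyMeasurable ?_
    filter_upwards [ae_restrict_mem measurableSet_Ioo] with t ht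
    rw [Real.norm_eq_abs, ← sq_le_one_iff_abs_le_one]
    nlinarith [harc t ht, sq_nonneg (deriv L t)]
  obtain ⟨C, hC⟩ := exists_norm_le_of_hasDerivAt_of_integrableOn ordConnected_Ioo hb22 hR'b11
  have hlim : Tendsto (fun t => deriv L t * (b22 t / R t)) (𝓝[>] 0) (𝓝 0) :=
    hL0.zero_mul_isBoundedUnder_le <| isBoundedUnder_of_eventually_le (a := C) <|
      eventually_of_mem (Ioo_mem_nhdsGT hT) hC
  refine eqOn_const_of_hasDerivAt_of_ae_eq_zero_of_tendsto hT
    (fun t ht => (hL2 t ht).hasDerivAt.mul (hb22 t ht)) ?_ hlim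
  filter_upwards [hGauss, ae_restrict_mem measurableSet_Ioo] with t hG ht
  have harc' := mul_deriv_add_mul_deriv_eq_zero_of_sq_add_sq_eq isOpen_Ioo hR2 hL2 harc ht
  show deriv (deriv L) t * (b22 t / R t) + deriv L t * (deriv R t * b11 t) = 0
  field_simp [hR t ht]
  linear_combination deriv R t * hG - b22 t * deriv (deriv L) t * harc t ht
    + b22 t * deriv L t * harc'

theorem rot_symmetric_stationarity_core_general
    (T : ℝ) (hT : 0 < T) (R L : ℝ → ℝ)
    (hR2 : ∀ t ∈ Ioo 0 T, DifferentiableAt ℝ (deriv R) t)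
    (hL2 : ∀ t ∈ Ioo 0 T, DifferentiableAt ℝ (deriv L) t)
    (hRpos : ∀ t ∈ Ioo 0 T, 0 < R t)
    (harc : ∀ t ∈ Ioo 0 T, (deriv R t) ^ 2 + (deriv L t) ^ 2 = 1)
    (hL0 : Tendsto (deriv L) (nhdsWithin 0 (Ioi 0)) (nhds 0))
    (b11 b22 : ℝ → ℝ)
    (hb11 : IntegrableOn b11 (Ioo 0 T))
    (hb22 : ∀ t ∈ Ioo 0 T,
      HasDerivAt (fun s => b22 s / R s) (deriv R t * b11 t) t)
    (hGauss : ∀ᵐ t ∂(volume.restrict (Ioo 0 T)),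
      b11 t * R t * deriv L t
        = (deriv L t * deriv (deriv R) t - deriv R t * deriv (deriv L) t) * b22 t) :
    ∀ᵐ t ∂(volume.restrict (Ioo 0 T)),
      (deriv R t * deriv (deriv L) t - deriv L t * deriv (deriv R) t) * b11 t
        + deriv L t * b22 t / (R t) ^ 3 = 0 := by
  have hR : ∀ t ∈ Ioo 0 T, R t ≠ 0 := fun t ht => (hRpos t ht).ne'
  have hg := deriv_mul_div_eqOn_zero_of_linearized_gauss hT hR2 hL2 hR harc hL0 hb11 hb22 hGauss
  have hlevel := ae_deriv_eq_zero_of_apply_eq hL2 0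
  filter_upwards [hGauss, ae_restrict_of_ae hlevel, ae_restrict_mem measurableSet_Ioo]
    with t hG hL'' ht
  rcases eq_or_ne (deriv L t) 0 with hL' | hL'
  · rw [hL', hL'' ht hL']
    ring
  · have hb22 : b22 t = 0 := by
      simpa [hL', hR t ht] using hg ht
    have hb11 : b11 t = 0 := by
      simpa [hb22, hL', hR t ht] using hG
    rw [hb11, hb22]
    ring

/-- For an arclength-parametrised rotationally symmetric profile `(R, L)`
with `L'(0⁺) = 0`, if `b₁₁ ∈ L¹(0,T)`, `(b₂₂/R)' = R'·b₁₁` everywhere on `(0,T)`, and the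
linearised Gauss equation `b₁₁ R L' = (L'R'' − R'L'') b₂₂` holds a.e., then
`(R'L'' − L'R'') b₁₁ + L' b₂₂ / R³ = 0` a.e. on `(0,T)`. -/
theorem rot_symmetric_stationarity_core
    (T : ℝ) (hT : 0 < T) (R L : ℝ → ℝ)
    (hR1 : ∀ t ∈ Ioo 0 T, DifferentiableAt ℝ R t)
    (hR2 : ∀ t ∈ Ioo 0 T, DifferentiableAt ℝ (deriv R) t)
    (hL1 : ∀ t ∈ Ioo 0 T, DifferentiableAt ℝ L t)
    (hL2 : ∀ t ∈ Ioo 0 T, DifferentiableAt ℝ (deriv L) t)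
    (hRpos : ∀ t ∈ Ioo 0 T, 0 < R t)
    (harc : ∀ t ∈ Ioo 0 T, (deriv R t) ^ 2 + (deriv L t) ^ 2 = 1)
    (hL0 : Tendsto (deriv L) (nhdsWithin 0 (Ioi 0)) (nhds 0))
    (b11 b22 : ℝ → ℝ)
    (hb11 : IntegrableOn b11 (Ioo 0 T))
    (hb22 : ∀ t ∈ Ioo 0 T,
      HasDerivAt (fun s => b22 s / R s) (deriv R t * b11 t) t)
    (hGauss : ∀ᵐ t ∂(volume.restrict (Ioo 0 T)),
      b11 t * R t * deriv L t
        = (deriv L t * deriv (deriv R) t - deriv R t * deriv (deriv L) t) * b22 t) :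
    ∀ᵐ t ∂(volume.restrict (Ioo 0 T)),
      (deriv R t * deriv (deriv L) t - deriv L t * deriv (deriv R) t) * b11 t
        + deriv L t * b22 t / (R t) ^ 3 = 0 :=
  rot_symmetric_stationarity_core_general T hT R L hR2 hL2 hRpos harc hL0 b11 b22 hb11 hb22 hGauss
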